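/- arXiv:1604.04774 — 5 statements merged into one kernel-verified Lean document; each statement's English description precedes it below -/
import Mathlib

section
/- Let a ∈ ℂ and f(x,y) = x^4 + a x^2 y^2 + y^4. Then the Jacobian ideal Jac(f) = ⟨4x^3 + 2a x y^2, 2a x^2 y + 4 y^3⟩ contains a power of the maximal ideal ⟨x,y⟩ of ℂ[[x,y]] if and only if a^2 ≠ 4; in that case the Milnor number dim_ℂ ℂ[[x,y]]/Jac(f) equals 9. -/
/-!
If `a² ≠ 4`, the determinant `16 - 4a²` of the system expressing `x³y` and `xy³` through
`y ∂ₓf` and `x ∂ᵧf` is nonzero, so `x³y, xy³ ∈ J`, hence `x⁵, y⁵ ∈ J` and `⟨x, y⟩⁵ ⊆ J`.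
Modulo `J` every power series then reduces to a combination of `1, x, y, x², xy, y², x²y, xy²,
x²y²`, and the coefficients of this reduction are linear functionals vanishing on `J`, so
`ℂ[[x, y]] ⧸ J ≅ ℂ⁹`. If `a² = 4`, then `f = (x² + (a/2) y²)²`; for `c² = -a/2` the substitution
`x ↦ c t, y ↦ t` kills `J` but sends `xⁿ` to `cⁿ tⁿ ≠ 0`, so no power of `⟨x, y⟩` lies in `J`.
-/

open MvPowerSeries

theorem Ideal.span_pair_pow_le {A : Type*} [CommRing A] {x y : A} :
    ∀ (n : ℕ) (K : Ideal A), (∀ i j : ℕ, i + j = n → x ^ i * y ^ j ∈ K) →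
      Ideal.span {x, y} ^ n ≤ K
  | 0, K, h => by simpa [Ideal.one_eq_top, top_le_iff, Ideal.eq_top_iff_one] using h 0 0 rfl
  | n + 1, K, h => by
    rw [pow_succ, Ideal.mul_le]
    intro r hr s hs
    have hr' : r ∈ K.colon (Ideal.span {x}) ⊓ K.colon (Ideal.span {y}) := by
      refine span_pair_pow_le n _ (fun i j hij => ?_) hr
      simp only [Submodule.mem_inf, Ideal.mem_colon_span_singleton]
      constructor
      · simpa [pow_succ, mul_right_comm] using h (i + 1) j (by omega)
      · simpa [pow_succ, mul_assoc] using h i (j + 1) (by omega)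
    simp only [Submodule.mem_inf, Ideal.mem_colon_span_singleton] at hr'
    obtain ⟨c, d, rfl⟩ := Ideal.mem_span_pair.1 hs
    rw [mul_add, mul_left_comm, mul_left_comm r d]
    exact K.add_mem (K.mul_mem_left _ hr'.1) (K.mul_mem_left _ hr'.2)

noncomputable def bidegree (i j : ℕ) : Fin 2 →₀ ℕ := Finsupp.single 0 i + Finsupp.single 1 j

@[simp] lemma bidegree_apply_zero (i j : ℕ) : bidegree i j 0 = i := by simp [bidegree]
@[simp] lemma bidegree_apply_one (i j : ℕ) : bidegree i j 1 = j := by simp [bidegree]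

lemma eq_bidegree (d : Fin 2 →₀ ℕ) : d = bidegree (d 0) (d 1) := by
  ext s; fin_cases s <;> simp

@[simp] lemma bidegree_inj {i j k l : ℕ} : bidegree i j = bidegree k l ↔ i = k ∧ j = l where
  mp h := ⟨by simpa using congr($h 0), by simpa using congr($h 1)⟩
  mpr := by rintro ⟨rfl, rfl⟩; rfl

@[simp] lemma bidegree_le_bidegree {i j k l : ℕ} :
    bidegree i j ≤ bidegree k l ↔ i ≤ k ∧ j ≤ l := by
  rw [Finsupp.le_def, Fin.forall_fin_two]; simp

@[simp] lemma bidegree_add_bidegree (i j k l : ℕ) :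
    bidegree i j + bidegree k l = bidegree (i + k) (j + l) := by
  ext s; fin_cases s <;> simp

@[simp] lemma bidegree_sub_bidegree (i j k l : ℕ) :
    bidegree i j - bidegree k l = bidegree (i - k) (j - l) := by
  ext s; fin_cases s <;> simp

lemma Finsupp.degree_fin_two (d : Fin 2 →₀ ℕ) : d.degree = d 0 + d 1 := by
  simp [Finsupp.degree_eq_sum, Fin.sum_univ_two]

@[simp] lemma degree_bidegree (i j : ℕ) : (bidegree i j).degree = i + j := by
  simp [Finsupp.degree_fin_two]

namespace MvPowerSeries

lemma monomial_bidegree {R : Type*} [CommSemiring R] (i j : ℕ) (c : R) :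
    monomial (bidegree i j) c = C c * X 0 ^ i * X 1 ^ j := by
  rw [X_pow_eq, X_pow_eq, ← monomial_zero_eq_C_apply, monomial_mul_monomial,
    monomial_mul_monomial, mul_one, mul_one, zero_add, bidegree]

theorem mem_span_X_pow_of_le_order {R : Type*} [CommRing R] [IsDomain R] :
    ∀ (n : ℕ) (f : MvPowerSeries (Fin 2) R), (n : ℕ∞) ≤ f.order →
      f ∈ Ideal.span {X 0, X 1} ^ n
  | 0, f, _ => by simp
  | n + 1, f, hf => by
    -- split `f = X 0 * g + k`, where `k` collects the terms of `f` free of `X 0`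
    let k : MvPowerSeries (Fin 2) R := fun d => if d 0 = 0 then coeff d f else 0
    have hk (d : Fin 2 →₀ ℕ) : coeff d k = if d 0 = 0 then coeff d f else 0 := rfl
    have hf' (d : Fin 2 →₀ ℕ) (hd : d.degree < n + 1) : coeff d f = 0 :=
      coeff_of_lt_order (lt_of_lt_of_le (by exact_mod_cast hd) hf)
    obtain ⟨g, hg⟩ : X 0 ∣ f - k := X_dvd_iff.2 fun d hd => by simp [hk, hd]
    obtain ⟨h, hh⟩ : X 1 ^ (n + 1) ∣ k := X_pow_dvd_iff.2 fun d hd => by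
      rw [hk]; split_ifs with h0
      · exact hf' d (by rw [Finsupp.degree_fin_two]; omega)
      · rfl
    have hg_order : (n : ℕ∞) ≤ g.order := by
      have : ((n + 1 : ℕ) : ℕ∞) ≤ (X 0 * g).order := by
        refine nat_le_order fun d hd => ?_
        rw [← hg, map_sub, hk]
        split_ifs <;> simp [hf' d (by exact_mod_cast hd)]
      rw [order_mul, X, order_monomial_of_ne_zero one_ne_zero, Finsupp.degree_single] at this
      push_cast at this
      rw [add_comm 1 g.order] at this
      exact (ENat.add_le_add_iff_right ENat.one_ne_top).1 this
    rw [← sub_add_cancel f k, hg, hh]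
    refine Ideal.add_mem _ ?_
      (Ideal.mul_mem_right _ _ (Ideal.pow_mem_pow (Ideal.subset_span (by simp)) _))
    rw [pow_succ']
    exact Ideal.mul_mem_mul (Ideal.subset_span (by simp))
      (mem_span_X_pow_of_le_order n g hg_order)

lemma mem_of_C_mul_mem {σ K : Type*} [Field K] {I : Ideal (MvPowerSeries σ K)} {c : K}
    (hc : c ≠ 0) {f : MvPowerSeries σ K} (h : C c * f ∈ I) : f ∈ I :=
  (Ideal.unit_mul_mem_iff_mem _ ((Ne.isUnit hc).map C)).1 h

end MvPowerSeries

theorem finrank_quotient_eq_of_ker_eq {K A V : Type*} [Field K] [CommRing A] [Algebra K A]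
    [AddCommGroup V] [Module K V] {I : Ideal A} (φ : A →ₗ[K] V) (hφ : Function.Surjective φ)
    (hker : LinearMap.ker φ = I.restrictScalars K) :
    Module.finrank K (A ⧸ I) = Module.finrank K V :=
  (((Submodule.Quotient.restrictScalarsEquiv K I).symm.trans
    (Submodule.quotEquivOfEq _ _ hker.symm)).trans
    (LinearMap.quotKerEquivOfSurjective φ hφ)).finrank_eq

namespace X9

local notation "R₂" => MvPowerSeries (Fin 2) ℂ

noncomputable def partialX (a : ℂ) : R₂ := 4 * X 0 ^ 3 + 2 * C a * X 0 * X 1 ^ 2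

noncomputable def partialY (a : ℂ) : R₂ := 2 * C a * X 0 ^ 2 * X 1 + 4 * X 1 ^ 3

noncomputable def jacobianIdeal (a : ℂ) : Ideal R₂ := Ideal.span {partialX a, partialY a}

variable {a : ℂ}

lemma partialX_mem : partialX a ∈ jacobianIdeal a := Ideal.subset_span (by simp)

lemma partialY_mem : partialY a ∈ jacobianIdeal a := Ideal.subset_span (by simp)

lemma X_zero_pow_three_mul_X_one_mem (ha : a ^ 2 ≠ 4) :
    X 0 ^ 3 * X 1 ^ 1 ∈ jacobianIdeal a := by
  have hδ : (16 - 4 * a ^ 2 : ℂ) ≠ 0 := by contrapose! ha; linear_combination -ha / 4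
  refine mem_of_C_mul_mem hδ ?_
  have : C (16 - 4 * a ^ 2) * (X 0 ^ 3 * X 1 ^ 1 : R₂) =
      4 * X 1 * partialX a - 2 * C a * X 0 * partialY a := by
    simp only [partialX, partialY, map_sub, map_mul, map_pow, map_ofNat]; ring
  rw [this]
  exact sub_mem (Ideal.mul_mem_left _ _ partialX_mem) (Ideal.mul_mem_left _ _ partialY_mem)

lemma X_zero_mul_X_one_pow_three_mem (ha : a ^ 2 ≠ 4) :
    X 0 ^ 1 * X 1 ^ 3 ∈ jacobianIdeal a := by
  have hδ : (16 - 4 * a ^ 2 : ℂ) ≠ 0 := by contrapose! ha; linear_combination -ha / 4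
  refine mem_of_C_mul_mem hδ ?_
  have : C (16 - 4 * a ^ 2) * (X 0 ^ 1 * X 1 ^ 3 : R₂) =
      4 * X 0 * partialY a - 2 * C a * X 1 * partialX a := by
    simp only [partialX, partialY, map_sub, map_mul, map_pow, map_ofNat]; ring
  rw [this]
  exact sub_mem (Ideal.mul_mem_left _ _ partialY_mem) (Ideal.mul_mem_left _ _ partialX_mem)

lemma X_zero_pow_five_mem (ha : a ^ 2 ≠ 4) : X 0 ^ 5 * X 1 ^ 0 ∈ jacobianIdeal a := by
  refine mem_of_C_mul_mem (by norm_num : (4 : ℂ) ≠ 0) ?_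
  have : C 4 * (X 0 ^ 5 * X 1 ^ 0 : R₂) =
      X 0 ^ 2 * partialX a - 2 * C a * X 1 * (X 0 ^ 3 * X 1 ^ 1) := by
    simp only [partialX, map_ofNat]; ring
  rw [this]
  exact sub_mem (Ideal.mul_mem_left _ _ partialX_mem)
    (Ideal.mul_mem_left _ _ (X_zero_pow_three_mul_X_one_mem ha))

lemma X_one_pow_five_mem (ha : a ^ 2 ≠ 4) : X 0 ^ 0 * X 1 ^ 5 ∈ jacobianIdeal a := by
  refine mem_of_C_mul_mem (by norm_num : (4 : ℂ) ≠ 0) ?_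
  have : C 4 * (X 0 ^ 0 * X 1 ^ 5 : R₂) =
      X 1 ^ 2 * partialY a - 2 * C a * X 0 * (X 0 ^ 1 * X 1 ^ 3) := by
    simp only [partialY, map_ofNat]; ring
  rw [this]
  exact sub_mem (Ideal.mul_mem_left _ _ partialY_mem)
    (Ideal.mul_mem_left _ _ (X_zero_mul_X_one_pow_three_mem ha))

lemma span_X_pow_five_le (ha : a ^ 2 ≠ 4) :
    Ideal.span {X 0, X 1} ^ 5 ≤ jacobianIdeal a := by
  refine Ideal.span_pair_pow_le 5 _ fun i j hij => ?_
  obtain ⟨k, l, hkl, hdvd⟩ : ∃ k l, X 0 ^ k * X 1 ^ l ∈ jacobianIdeal a ∧ k ≤ i ∧ l ≤ j := by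
    obtain h | h | h | h : (3 ≤ i ∧ 1 ≤ j) ∨ (1 ≤ i ∧ 3 ≤ j) ∨ j = 0 ∨ i = 0 := by omega
    · exact ⟨3, 1, X_zero_pow_three_mul_X_one_mem ha, h⟩
    · exact ⟨1, 3, X_zero_mul_X_one_pow_three_mem ha, h⟩
    · exact ⟨5, 0, X_zero_pow_five_mem ha, by omega, by omega⟩
    · exact ⟨0, 5, X_one_pow_five_mem ha, by omega, by omega⟩
  exact Ideal.mem_of_dvd _ (mul_dvd_mul (pow_dvd_pow _ hdvd.1) (pow_dvd_pow _ hdvd.2)) hkl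

lemma hasSubst_C_mul_X_X (c : ℂ) :
    HasSubst ![PowerSeries.C c * PowerSeries.X, (PowerSeries.X : PowerSeries ℂ)] :=
  hasSubst_of_constantCoeff_zero fun s => by fin_cases s <;> simp [PowerSeries.X, PowerSeries.C]

lemma jacobianIdeal_le_ker_subst {c : ℂ} (hc : 2 * c ^ 2 + a = 0) (ha : a ^ 2 = 4) :
    jacobianIdeal a ≤ RingHom.ker (substAlgHom (hasSubst_C_mul_X_X c)) := by
  have hC : 2 * PowerSeries.C c ^ 2 + PowerSeries.C a = 0 := by
    simpa only [map_add, map_mul, map_pow, map_ofNat, map_zero] using congr(PowerSeries.C $hc)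
  have hC' : PowerSeries.C a ^ 2 = 4 := by
    simpa only [map_pow, map_ofNat] using congr(PowerSeries.C $ha)
  have hψC : substAlgHom (hasSubst_C_mul_X_X c) (C a) = PowerSeries.C a := by
    rw [c_eq_algebraMap, AlgHom.commutes, PowerSeries.algebraMap_eq]
  rw [jacobianIdeal, Ideal.span_le]
  rintro _ (rfl | rfl) <;>
    simp only [partialX, partialY, SetLike.mem_coe, RingHom.mem_ker, map_add, map_mul, map_pow,
      map_ofNat, hψC, substAlgHom_X, Matrix.cons_val_zero, Matrix.cons_val_one]
  · linear_combination (2 * PowerSeries.C c * PowerSeries.X ^ 3) * hC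
  · linear_combination (PowerSeries.C a * PowerSeries.X ^ 3) * hC - PowerSeries.X ^ 3 * hC'

lemma not_span_X_pow_le (ha : a ^ 2 = 4) (n : ℕ) :
    ¬ Ideal.span {X 0, X 1} ^ n ≤ jacobianIdeal a := by
  intro hle
  obtain ⟨c, hc⟩ := IsAlgClosed.exists_eq_mul_self (-a / 2)
  have hc0 : c ≠ 0 := by
    rintro rfl
    have : a = 0 := by linear_combination -2 * hc
    simp [this] at ha
  have hXn : (X 0 : R₂) ^ n ∈ RingHom.ker (substAlgHom (hasSubst_C_mul_X_X c)) :=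
    jacobianIdeal_le_ker_subst (by linear_combination -2 * hc) ha
      (hle (Ideal.pow_mem_pow (Ideal.subset_span (Set.mem_insert _ _)) n))
  rw [RingHom.mem_ker, map_pow, substAlgHom_X, Matrix.cons_val_zero] at hXn
  exact pow_ne_zero n (mul_ne_zero (by simpa using hc0) PowerSeries.X_ne_zero) hXn

/-- Coordinates of the class of `f` modulo `jacobianIdeal a` in the monomial basis
`1, x, y, x², xy, y², x²y, xy², x²y²`: modulo the Jacobian ideal, `x³ ≡ -(a/2) xy²`,
`y³ ≡ -(a/2) x²y`, `x⁴ ≡ y⁴ ≡ -(a/2) x²y²`, and `x³y`, `xy³` and all monomials of degree `5`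
vanish. -/
noncomputable def milnorCoords (a : ℂ) : R₂ →ₗ[ℂ] (Fin 9 → ℂ) :=
  LinearMap.pi ![coeff (bidegree 0 0), coeff (bidegree 1 0), coeff (bidegree 0 1),
    coeff (bidegree 2 0), coeff (bidegree 1 1), coeff (bidegree 0 2),
    coeff (bidegree 2 1) - (a / 2) • coeff (bidegree 0 3),
    coeff (bidegree 1 2) - (a / 2) • coeff (bidegree 3 0),
    coeff (bidegree 2 2) - (a / 2) • (coeff (bidegree 4 0) + coeff (bidegree 0 4))]

noncomputable def milnorLift (v : Fin 9 → ℂ) : R₂ :=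
  monomial (bidegree 0 0) (v 0) + monomial (bidegree 1 0) (v 1) + monomial (bidegree 0 1) (v 2) +
    monomial (bidegree 2 0) (v 3) + monomial (bidegree 1 1) (v 4) +
    monomial (bidegree 0 2) (v 5) + monomial (bidegree 2 1) (v 6) +
    monomial (bidegree 1 2) (v 7) + monomial (bidegree 2 2) (v 8)

lemma milnorCoords_milnorLift (v : Fin 9 → ℂ) : milnorCoords a (milnorLift v) = v := by
  funext k
  fin_cases k <;> simp [milnorCoords, milnorLift, coeff_monomial]

lemma partialX_eq_monomial :
    partialX a = monomial (bidegree 3 0) 4 + monomial (bidegree 1 2) (2 * a) := by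
  simp only [partialX, monomial_bidegree, map_mul, map_ofNat]; ring

lemma partialY_eq_monomial :
    partialY a = monomial (bidegree 2 1) (2 * a) + monomial (bidegree 0 3) 4 := by
  simp only [partialY, monomial_bidegree, map_mul, map_ofNat]; ring

lemma milnorCoords_mul_partialX (h : R₂) : milnorCoords a (h * partialX a) = 0 := by
  rw [partialX_eq_monomial]
  funext k
  fin_cases k <;> simp [milnorCoords, mul_add, coeff_mul_monomial] <;> ring

lemma milnorCoords_mul_partialY (h : R₂) : milnorCoords a (h * partialY a) = 0 := by
  rw [partialY_eq_monomial]
  funext k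
  fin_cases k <;> simp [milnorCoords, mul_add, coeff_mul_monomial] <;> ring

lemma jacobianIdeal_le_ker_milnorCoords :
    (jacobianIdeal a).restrictScalars ℂ ≤ LinearMap.ker (milnorCoords a) := by
  intro f hf
  obtain ⟨g, h, rfl⟩ := Ideal.mem_span_pair.1 hf
  simp [milnorCoords_mul_partialX, milnorCoords_mul_partialY]

lemma sub_milnorLift_milnorCoords_mem (ha : a ^ 2 ≠ 4) (f : R₂) :
    f - milnorLift (milnorCoords a f) ∈ jacobianIdeal a := by
  let c (i j : ℕ) : ℂ := coeff (bidegree i j) f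
  -- `w ∈ J` absorbs the terms `x³, y³, x⁴, y⁴, x³y, xy³` of `f`; what remains has order `≥ 5`
  let w : R₂ := monomial (bidegree 0 0) (c 3 0 / 4) * partialX a +
    monomial (bidegree 0 0) (c 0 3 / 4) * partialY a +
    monomial (bidegree 1 0) (c 4 0 / 4) * partialX a +
    monomial (bidegree 0 1) (c 0 4 / 4) * partialY a +
    monomial (bidegree 3 1) (c 3 1) + monomial (bidegree 1 3) (c 1 3)
  have hw : w ∈ jacobianIdeal a := by
    have := X_zero_pow_three_mul_X_one_mem ha
    have := X_zero_mul_X_one_pow_three_mem ha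
    have := partialX_mem (a := a)
    have := partialY_mem (a := a)
    simp only [w, monomial_bidegree _ _ (c _ _), mul_assoc]
    repeat' apply add_mem
    all_goals exact Ideal.mul_mem_left _ _ ‹_›
  have hr : f - milnorLift (milnorCoords a f) - w ∈ jacobianIdeal a := by
    refine span_X_pow_five_le ha (mem_span_X_pow_of_le_order 5 _ (nat_le_order fun d hd => ?_))
    obtain ⟨i, j, rfl⟩ : ∃ i j, d = bidegree i j := ⟨_, _, eq_bidegree d⟩
    have hij : i + j < 5 := by simpa only [degree_bidegree, Nat.cast_lt] using hd
    have hi : i < 5 := by omega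
    have hj : j < 5 - i := by omega
    interval_cases i <;> interval_cases j <;>
      simp [w, c, milnorCoords, milnorLift, partialX_eq_monomial, partialY_eq_monomial, mul_add,
        monomial_mul_monomial, coeff_monomial] <;> ring
  simpa [w] using add_mem hr hw

lemma ker_milnorCoords (ha : a ^ 2 ≠ 4) :
    LinearMap.ker (milnorCoords a) = (jacobianIdeal a).restrictScalars ℂ := by
  refine le_antisymm (fun f hf => ?_) jacobianIdeal_le_ker_milnorCoords
  simpa [LinearMap.mem_ker.1 hf, milnorLift] using sub_milnorLift_milnorCoords_mem ha f

end X9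

/-- For `f = x⁴ + a x² y² + y⁴` (type `X₉`), the Jacobian ideal contains a power of the
maximal ideal iff `a² ≠ 4`, and in that case the Milnor number is `9`. -/
theorem X9_isolated_iff (a : ℂ) :
    ((∃ n : ℕ, (Ideal.span {(X 0 : MvPowerSeries (Fin 2) ℂ), X 1}) ^ n ≤
        Ideal.span {4 * X 0 ^ 3 + 2 * (C (σ := Fin 2) (R := ℂ) a) * X 0 * X 1 ^ 2,
          2 * (C (σ := Fin 2) (R := ℂ) a) * X 0 ^ 2 * X 1 + 4 * X 1 ^ 3}) ↔ a ^ 2 ≠ 4) ∧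
    (a ^ 2 ≠ 4 →
      Module.finrank ℂ
        (MvPowerSeries (Fin 2) ℂ ⧸
          Ideal.span {4 * X 0 ^ 3 + 2 * (C (σ := Fin 2) (R := ℂ) a) * X 0 * X 1 ^ 2,
            2 * (C (σ := Fin 2) (R := ℂ) a) * X 0 ^ 2 * X 1 + 4 * X 1 ^ 3}) = 9) := by
  refine ⟨⟨fun ⟨n, hn⟩ ha => X9.not_span_X_pow_le ha n hn,
    fun ha => ⟨5, X9.span_X_pow_five_le ha⟩⟩, fun ha => ?_⟩
  rw [← Module.finrank_fin_fun ℂ (n := 9)]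
  exact finrank_quotient_eq_of_ker_eq (X9.milnorCoords a)
    (fun v => ⟨X9.milnorLift v, X9.milnorCoords_milnorLift v⟩) (X9.ker_milnorCoords ha)
end

section
/- Give x weight 3 and y weight 2, and let N ∈ ℕ. Let g = ∑_{3i+2j=N} w_{ij} x^i y^j ∈ ℂ[x,y] be weighted homogeneous of degree N. Then g is divisible by x^2 + y^3 in ℂ[x,y] if and only if ∑_{3i+2j=N} (−1)^{⌊i/2⌋} w_{ij} = 0. -/
open MvPolynomial

lemma key_dvd (r j k : ℕ) :
    (X 0 ^ 2 + X 1 ^ 3 : MvPolynomial (Fin 2) ℂ) ∣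
      X 0 ^ (2 * k + r) * X 1 ^ j - C ((-1 : ℂ) ^ k) * (X 0 ^ r * X 1 ^ (j + 3 * k)) := by
  induction k with
  | zero => simp
  | succ k ih =>
    have h : X 0 ^ (2*(k+1)+r) * X 1 ^ j
        - C ((-1:ℂ)^(k+1)) * ((X 0 : MvPolynomial (Fin 2) ℂ) ^ r * X 1 ^ (j+3*(k+1)))
      = X 0 ^ 2 * (X 0 ^ (2*k+r) * X 1 ^ j - C ((-1:ℂ)^k) * (X 0 ^ r * X 1 ^ (j+3*k)))
        + C ((-1:ℂ)^k) * (X 0 ^ r * X 1 ^ (j+3*k)) * (X 0 ^ 2 + X 1 ^ 3) := by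
      have e1 : 2*(k+1)+r = 2 + (2*k+r) := by ring
      have e2 : j+3*(k+1) = (j+3*k)+3 := by ring
      rw [e1, e2, pow_succ (-1:ℂ) k, map_mul,
        pow_add (X 0 : MvPolynomial (Fin 2) ℂ) 2 (2*k+r),
        pow_add (X 1 : MvPolynomial (Fin 2) ℂ) (j+3*k) 3, map_neg, map_one]
      ring
    rw [h]
    exact dvd_add (Dvd.dvd.mul_left ih _) (Dvd.dvd.mul_left dvd_rfl _)

/-- Divisibility criterion: a `(3,2)`-weighted homogeneous polynomial `g` of degree `N`
is divisible by `x² + y³` iff the alternating sum `∑ (-1)^⌊i/2⌋ w_{ij}` of its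
coefficients vanishes. -/
theorem divisible_iff_alternating_sum (N : ℕ) (g : MvPolynomial (Fin 2) ℂ)
    (hg : ∀ m ∈ g.support, 3 * m 0 + 2 * m 1 = N) :
    ((X 0 ^ 2 + X 1 ^ 3 : MvPolynomial (Fin 2) ℂ) ∣ g) ↔
      ∑ m ∈ g.support, (-1 : ℂ) ^ (m 0 / 2) * coeff m g = 0 := by
  constructor
  · rintro ⟨q, hq⟩
    have hev : eval (![Complex.I, 1]) g = 0 := by
      rw [hq, map_mul]
      have : eval (![Complex.I, 1])
          (X 0 ^ 2 + X 1 ^ 3 : MvPolynomial (Fin 2) ℂ) = 0 := by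
        simp [Complex.I_sq]
      rw [this, zero_mul]
    have hev2 : eval (![Complex.I, 1]) g
        = Complex.I ^ (N % 2) * ∑ m ∈ g.support, (-1 : ℂ) ^ (m 0 / 2) * coeff m g := by
      rw [eval_eq', Finset.mul_sum]
      refine Finset.sum_congr rfl fun m hm => ?_
      have hmN := hg m hm
      have h0 : m 0 = 2 * (m 0 / 2) + N % 2 := by omega
      rw [Fin.prod_univ_two]
      simp only [Matrix.cons_val_zero, Matrix.cons_val_one, Matrix.head_cons, one_pow, mul_one]
      conv_lhs => rw [h0]
      rw [pow_add, pow_mul, Complex.I_sq]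
      ring
    rw [hev2] at hev
    rcases mul_eq_zero.1 hev with h | h
    · exact absurd h (pow_ne_zero _ Complex.I_ne_zero)
    · exact h
  · intro hS
    set d : MvPolynomial (Fin 2) ℂ := X 0 ^ 2 + X 1 ^ 3 with hd
    set r := N % 2 with hr
    set base : MvPolynomial (Fin 2) ℂ := X 0 ^ r * X 1 ^ ((N - 3*r)/2) with hbase
    have hdvd : d ∣ ∑ m ∈ g.support,
        C (coeff m g) * (X 0 ^ m 0 * X 1 ^ m 1 - C ((-1:ℂ) ^ (m 0 / 2)) * base) := by
      refine Finset.dvd_sum fun m hm => ?_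
      have hmN := hg m hm
      set k := m 0 / 2 with hk
      have h0 : m 0 = 2 * k + r := by omega
      have h1 : (N - 3*r)/2 = m 1 + 3 * k := by omega
      rw [hbase, h1, h0]
      exact Dvd.dvd.mul_left (key_dvd r (m 1) k) _
    have heq : (∑ m ∈ g.support,
        C (coeff m g) * (X 0 ^ m 0 * X 1 ^ m 1 - C ((-1:ℂ) ^ (m 0 / 2)) * base)) = g := by
      simp only [mul_sub, Finset.sum_sub_distrib]
      have h1 : (∑ m ∈ g.support, C (coeff m g) * (X 0 ^ m 0 * X 1 ^ m 1)) = g := by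
        conv_rhs => rw [g.as_sum]
        refine Finset.sum_congr rfl fun m hm => ?_
        rw [monomial_eq, Finsupp.prod_fintype _ _ (fun i => pow_zero _), Fin.prod_univ_two]
      have h2 : (∑ m ∈ g.support, C (coeff m g) * (C ((-1:ℂ) ^ (m 0 / 2)) * base)) = 0 := by
        have : (∑ m ∈ g.support, C (coeff m g) * (C ((-1:ℂ) ^ (m 0 / 2)) * base))
            = C (∑ m ∈ g.support, (-1:ℂ) ^ (m 0 / 2) * coeff m g) * base := by
          rw [map_sum, Finset.sum_mul]
          refine Finset.sum_congr rfl fun m hm => ?_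
          rw [map_mul]; ring
        rw [this, hS, map_zero, zero_mul]
      rw [h1, h2, sub_zero]
    rw [heq] at hdvd
    exact hdvd
end

section
/- Give x weight 3 and y weight 2, and let N ∈ ℕ with N ≥ 6. For any weighted homogeneous polynomial g = ∑_{3i+2j=N} w_{ij} x^i y^j ∈ ℂ[x,y] there exist a unique constant c ∈ ℂ and a unique weighted homogeneous polynomial l of degree N − 6 such that g = c·m + l·(x^2 + y^3), where m = x^{r} y^{s} is the unique monomial with 3r + 2s = N and r ∈ {0,1}; moreover c = ∑_{3i+2j=N} (−1)^{⌊i/2⌋} w_{ij}. -/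
open MvPolynomial

private lemma monomial_fin2 (m : Fin 2 →₀ ℕ) (c : ℂ) :
    (monomial m c : MvPolynomial (Fin 2) ℂ) = C c * (X 0 ^ m 0 * X 1 ^ m 1) := by
  rw [monomial_eq]
  congr 1
  rw [Finsupp.prod_fintype _ _ (fun i => pow_zero _), Fin.prod_univ_two]

private lemma supp_mono {i j : ℕ} {m : Fin 2 →₀ ℕ}
    (hm : m ∈ (X 0 ^ i * X 1 ^ j : MvPolynomial (Fin 2) ℂ).support) :
    m 0 = i ∧ m 1 = j := by
  have h : (X 0 ^ i * X 1 ^ j : MvPolynomial (Fin 2) ℂ)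
      = monomial (Finsupp.single 0 i + Finsupp.single 1 j) 1 := by
    rw [X_pow_eq_monomial, X_pow_eq_monomial, monomial_mul, one_mul]
  rw [h, support_monomial] at hm
  simp only [one_ne_zero, if_false, Finset.mem_singleton] at hm
  subst hm
  simp [Finsupp.single_apply]

private lemma mono_decomp (N : ℕ) (hN : 6 ≤ N) :
    ∀ i j : ℕ, 3 * i + 2 * j = N → ∃ l : MvPolynomial (Fin 2) ℂ,
      (∀ m ∈ l.support, 3 * m 0 + 2 * m 1 = N - 6) ∧
      (X 0 ^ i * X 1 ^ j : MvPolynomial (Fin 2) ℂ)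
        = C ((-1 : ℂ) ^ (i / 2)) * (X 0 ^ (N % 2) * X 1 ^ ((N - 3 * (N % 2)) / 2))
          + l * (X 0 ^ 2 + X 1 ^ 3) := by
  intro i
  induction i using Nat.strong_induction_on with
  | _ i ih =>
    intro j hij
    by_cases h2 : i < 2
    · have hi : i = N % 2 := by omega
      have hj : j = (N - 3 * (N % 2)) / 2 := by omega
      have hi2 : i / 2 = 0 := by omega
      refine ⟨0, by simp, ?_⟩
      rw [hi2, pow_zero, map_one, one_mul, zero_mul, add_zero, hi, hj]
    · obtain ⟨k, rfl⟩ : ∃ k, i = k + 2 := ⟨i - 2, by omega⟩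
      obtain ⟨l', hl's, hl'⟩ := ih k (by omega) (j + 3) (by omega)
      refine ⟨X 0 ^ k * X 1 ^ j - l', ?_, ?_⟩
      · intro m hm
        rcases Finset.mem_union.mp (support_sub _ _ _ hm) with h | h
        · obtain ⟨h0, h1⟩ := supp_mono h
          omega
        · exact hl's m h
      · have key : (X 0 ^ (k + 2) * X 1 ^ j : MvPolynomial (Fin 2) ℂ)
            = X 0 ^ k * X 1 ^ j * (X 0 ^ 2 + X 1 ^ 3) - X 0 ^ k * X 1 ^ (j + 3) := by
          ring
        rw [key, hl', show (-1 : ℂ) ^ ((k + 2) / 2) = -(-1 : ℂ) ^ (k / 2) by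
          rw [show (k + 2) / 2 = k / 2 + 1 by omega]; ring, map_neg]
        ring

private lemma eval_q : eval ![(1 : ℂ), -1] ((X 0 : MvPolynomial (Fin 2) ℂ) ^ 2 + X 1 ^ 3) = 0 := by
  simp only [map_add, map_pow, eval_X, Matrix.cons_val_zero, Matrix.cons_val_one, Matrix.head_cons]
  norm_num

private lemma eval_g (g : MvPolynomial (Fin 2) ℂ) :
    eval ![(1 : ℂ), -1] g = ∑ m ∈ g.support, (-1 : ℂ) ^ (m 1) * coeff m g := by
  rw [eval_eq']
  refine Finset.sum_congr rfl fun m hm => ?_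
  rw [Fin.prod_univ_two]
  simp [mul_comm]

private lemma parity (N i j : ℕ) (h : 3 * i + 2 * j = N) (hN : 6 ≤ N) :
    (-1 : ℂ) ^ ((N - 3 * (N % 2)) / 2) * (-1 : ℂ) ^ j = (-1 : ℂ) ^ (i / 2) := by
  rw [← pow_add, neg_one_pow_eq_pow_mod_two, neg_one_pow_eq_pow_mod_two (n := i / 2)]
  congr 1
  have hs : (N - 3 * (N % 2)) / 2 = 3 * (i / 2) + j := by omega
  omega

/-- Decomposition of a `(3,2)`-weighted homogeneous polynomial `g` of degree `N ≥ 6`: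
there exist a unique constant `c` and a unique weighted homogeneous `l` of degree
`N - 6` with `g = c·m + l·(x²+y³)`, where `m = x^r y^s` is the unique monomial of
weighted degree `N` with `r ∈ {0,1}` (i.e. `r = N % 2`); moreover
`c = ∑ (-1)^⌊i/2⌋ w_{ij}`. -/
theorem weighted_decomposition (N : ℕ) (hN : 6 ≤ N) (g : MvPolynomial (Fin 2) ℂ)
    (hg : ∀ m ∈ g.support, 3 * m 0 + 2 * m 1 = N) :
    (∃! cl : ℂ × MvPolynomial (Fin 2) ℂ,
      (∀ m ∈ cl.2.support, 3 * m 0 + 2 * m 1 = N - 6) ∧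
      g = C cl.1 * (X 0 ^ (N % 2) * X 1 ^ ((N - 3 * (N % 2)) / 2)) +
            cl.2 * (X 0 ^ 2 + X 1 ^ 3)) ∧
    (∀ cl : ℂ × MvPolynomial (Fin 2) ℂ,
      ((∀ m ∈ cl.2.support, 3 * m 0 + 2 * m 1 = N - 6) ∧
        g = C cl.1 * (X 0 ^ (N % 2) * X 1 ^ ((N - 3 * (N % 2)) / 2)) +
              cl.2 * (X 0 ^ 2 + X 1 ^ 3)) →
      cl.1 = ∑ m ∈ g.support, (-1 : ℂ) ^ (m 0 / 2) * coeff m g) := by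
  classical
  -- choice of l for each monomial
  choose L hLs hLe using mono_decomp N hN
  have evalM : eval ![(1 : ℂ), -1]
      ((X 0 : MvPolynomial (Fin 2) ℂ) ^ (N % 2) * X 1 ^ ((N - 3 * (N % 2)) / 2))
      = (-1 : ℂ) ^ ((N - 3 * (N % 2)) / 2) := by
    simp
  -- formula for c from any decomposition
  have cformula : ∀ cl : ℂ × MvPolynomial (Fin 2) ℂ,
      g = C cl.1 * (X 0 ^ (N % 2) * X 1 ^ ((N - 3 * (N % 2)) / 2)) +
            cl.2 * (X 0 ^ 2 + X 1 ^ 3) →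
      cl.1 = ∑ m ∈ g.support, (-1 : ℂ) ^ (m 0 / 2) * coeff m g := by
    intro cl he
    have h1 : eval ![(1 : ℂ), -1] g = cl.1 * (-1 : ℂ) ^ ((N - 3 * (N % 2)) / 2) := by
      rw [he]
      simp only [map_add, map_mul, eval_C, evalM, map_pow, eval_X, Matrix.cons_val_zero,
        Matrix.cons_val_one, Matrix.head_cons]
      norm_num
    have h3 : ((-1 : ℂ) ^ ((N - 3 * (N % 2)) / 2)) * ((-1 : ℂ) ^ ((N - 3 * (N % 2)) / 2)) = 1 := by
      have he2 : ((N - 3 * (N % 2)) / 2 + (N - 3 * (N % 2)) / 2) % 2 = 0 := by omega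
      rw [← pow_add, neg_one_pow_eq_pow_mod_two, he2, pow_zero]
    have hc : cl.1 = (-1 : ℂ) ^ ((N - 3 * (N % 2)) / 2) * eval ![(1 : ℂ), -1] g := by
      rw [h1, mul_comm cl.1, ← mul_assoc, h3, one_mul]
    rw [hc, eval_g, Finset.mul_sum]
    refine Finset.sum_congr rfl fun m hm => ?_
    rw [← mul_assoc, parity N (m 0) (m 1) (hg m hm) hN]
  -- uniqueness
  have uniq : ∀ cl cl' : ℂ × MvPolynomial (Fin 2) ℂ,
      g = C cl.1 * (X 0 ^ (N % 2) * X 1 ^ ((N - 3 * (N % 2)) / 2)) + cl.2 * (X 0 ^ 2 + X 1 ^ 3) →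
      g = C cl'.1 * (X 0 ^ (N % 2) * X 1 ^ ((N - 3 * (N % 2)) / 2)) + cl'.2 * (X 0 ^ 2 + X 1 ^ 3) →
      cl = cl' := by
    intro cl cl' h h'
    have hc : cl.1 = cl'.1 := by rw [cformula cl h, cformula cl' h']
    have hqne : ((X 0 : MvPolynomial (Fin 2) ℂ) ^ 2 + X 1 ^ 3) ≠ 0 := by
      intro h0
      have := congrArg (eval ![(1 : ℂ), (0 : ℂ)]) h0
      simp at this
    have h1 : cl.2 * (X 0 ^ 2 + X 1 ^ 3) = cl'.2 * ((X 0 : MvPolynomial (Fin 2) ℂ) ^ 2 + X 1 ^ 3) := by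
      have h2 := h.symm.trans h'
      rw [hc] at h2
      exact add_left_cancel h2
    exact Prod.ext hc (mul_right_cancel₀ hqne h1)
  -- existence
  have exist : ∃ cl : ℂ × MvPolynomial (Fin 2) ℂ,
      (∀ m ∈ cl.2.support, 3 * m 0 + 2 * m 1 = N - 6) ∧
      g = C cl.1 * (X 0 ^ (N % 2) * X 1 ^ ((N - 3 * (N % 2)) / 2)) + cl.2 * (X 0 ^ 2 + X 1 ^ 3) := by
    refine ⟨⟨∑ m ∈ g.support, (-1 : ℂ) ^ (m 0 / 2) * coeff m g,
      ∑ m ∈ g.support.attach, C (coeff m.1 g) * L (m.1 0) (m.1 1) (hg m.1 m.2)⟩, ?_, ?_⟩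
    · dsimp only
      intro m hm
      obtain ⟨n, -, hn⟩ := Finset.mem_biUnion.mp (support_sum hm)
      have hn2 : m ∈ (L (n.1 0) (n.1 1) (hg n.1 n.2)).support := by
        have hcoef := mem_support_iff.mp hn
        rw [coeff_C_mul] at hcoef
        exact mem_support_iff.mpr (right_ne_zero_of_mul hcoef)
      exact hLs _ _ _ m hn2
    · dsimp only
      rw [← Finset.sum_attach g.support (fun m => (-1 : ℂ) ^ (m 0 / 2) * coeff m g), map_sum,
        Finset.sum_mul, Finset.sum_mul, ← Finset.sum_add_distrib]
      conv_lhs => rw [as_sum g, ← Finset.sum_attach g.support (fun v => monomial v (coeff v g))]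
      refine Finset.sum_congr rfl fun m _ => ?_
      rw [monomial_fin2, hLe (m.1 0) (m.1 1) (hg m.1 m.2), map_mul]
      ring
  obtain ⟨cl₀, hs₀, he₀⟩ := exist
  exact ⟨⟨cl₀, ⟨hs₀, he₀⟩, fun y hy => uniq y cl₀ hy.2 he₀⟩, fun cl hcl => cformula cl hcl.2⟩
end

section
/- Let f, g ∈ ℂ[[x_1,…,x_n]] be right equivalent via a ℂ-algebra automorphism φ of ℂ[[x_1,…,x_n]] with φ(f) = g, and let w ∈ ℕ^n be a weight such that f has maximal weighted filtration k (every monomial of f has w-degree ≥ k, and some monomial has w-degree exactly k). Suppose moreover that φ has filtration ≥ 0 with respect to w, and let φ_0^w be the automorphism sending each x_i to the part of φ(x_i) of w-degree exactly w-deg(x_i). If the weighted k-jet of f factorizes as w-jet(f,k) = f_1^{s_1} ⋯ f_t^{s_t}, then w-jet(g,k) = φ_0^w(f_1)^{s_1} ⋯ φ_0^w(f_t)^{s_t}. -/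
set_option synthInstance.maxHeartbeats 1000000
set_option maxHeartbeats 1000000

/-- `f ∈ E_d^w`: every monomial of `f` has `w`-weighted degree at least `d`. -/
def MemE (n : ℕ) (w : Fin n → ℕ) (d : ℕ) (f : MvPowerSeries (Fin n) ℂ) : Prop :=
  ∀ m : Fin n →₀ ℕ, MvPowerSeries.coeff m f ≠ 0 → d ≤ ∑ j, w j * m j

/-- The weighted `k`-jet of `f`: the sum of the terms of `f` of `w`-degree at most `k`. -/
noncomputable def wjet (n : ℕ) (w : Fin n → ℕ) (k : ℕ) (f : MvPowerSeries (Fin n) ℂ) :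
    MvPowerSeries (Fin n) ℂ :=
  fun m => if ∑ j, w j * m j ≤ k then MvPowerSeries.coeff m f else 0

/-- The part of `f` of `w`-degree exactly `e`. -/
noncomputable def wcomp (n : ℕ) (w : Fin n → ℕ) (e : ℕ) (f : MvPowerSeries (Fin n) ℂ) :
    MvPowerSeries (Fin n) ℂ :=
  fun m => if ∑ j, w j * m j = e then MvPowerSeries.coeff m f else 0

/-!
Write `P` for the component of `w`-degree `k` of `f`; it equals the `k`-jet of `f`. Since `φ` does
not lower weighted order, `φ (f - P)` has weighted order `> k`, so the `k`-jet of `g = φ f` is the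
degree-`k` component of `φ P`. For a monomial `x^d` of weight `k`, `φ (x^d) = ∏ φ(x_i)^(d_i)` and,
weighted components being multiplicative at the initial degrees, the degree-`k` component of this
product is `∏ ψ(x_i)^(d_i) = ψ (x^d)`.

To pass from monomials to the possibly infinite series `P`, note that an algebra endomorphism
sending the variables into the maximal ideal does not lower total order: a series of order `≥ N + 1`
is a sum `∑ x_i G_i` with `G_i` of order `≥ N`. So a fixed coefficient of `φ P` or `ψ P` only
depends on a polynomial truncation of `P`.
-/

open MvPowerSeries Finsupp

namespace MvPowerSeries

section WeightedHomogeneousComponent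

variable {σ R : Type*} [CommSemiring R] {w : σ → ℕ}

theorem weightedOrder_X [Nontrivial R] (w : σ → ℕ) (i : σ) :
    (X i : MvPowerSeries σ R).weightedOrder w = w i := by
  rw [X_def, weightedOrder_monomial_of_ne_zero w one_ne_zero, weight_single, one_smul]

theorem natCast_mul_le_weightedOrder_pow {f : MvPowerSeries σ R} {p : ℕ}
    (hf : p ≤ f.weightedOrder w) (n : ℕ) : ((n * p : ℕ) : ℕ∞) ≤ (f ^ n).weightedOrder w := by
  grw [← le_weightedOrder_pow, ← hf, nsmul_eq_mul, Nat.cast_mul]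

theorem weightedHomogeneousComponent_zero_one (w : σ → ℕ) :
    weightedHomogeneousComponent w 0 (1 : MvPowerSeries σ R) = 1 := by
  classical
  ext d
  by_cases hd : d = 0 <;> simp [coeff_weightedHomogeneousComponent, coeff_one, hd]

theorem weightedHomogeneousComponent_pow {f : MvPowerSeries σ R} {p : ℕ}
    (hf : p ≤ f.weightedOrder w) (n : ℕ) :
    weightedHomogeneousComponent w (n * p) (f ^ n) = weightedHomogeneousComponent w p f ^ n := by
  induction n with
  | zero => simpa using weightedHomogeneousComponent_zero_one w
  | succ n ih =>
    rw [add_one_mul, pow_succ, pow_succ, weightedHomogeneousComponent_mul_of_le_weightedOrder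
      (natCast_mul_le_weightedOrder_pow hf n) hf, ih]

theorem weightedHomogeneousComponent_prod {ι : Type*} (s : Finset ι)
    {f : ι → MvPowerSeries σ R} {p : ι → ℕ} (hf : ∀ i ∈ s, p i ≤ (f i).weightedOrder w) :
    weightedHomogeneousComponent w (∑ i ∈ s, p i) (∏ i ∈ s, f i) =
      ∏ i ∈ s, weightedHomogeneousComponent w (p i) (f i) := by
  induction s using Finset.cons_induction with
  | empty => simpa using weightedHomogeneousComponent_zero_one w
  | cons a s ha ih =>
    rw [Finset.forall_mem_cons] at hf
    have hs : ((∑ i ∈ s, p i : ℕ) : ℕ∞) ≤ (∏ i ∈ s, f i).weightedOrder w := by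
      grw [← le_weightedOrder_prod, Nat.cast_sum]
      exact Finset.sum_le_sum hf.2
    rw [Finset.sum_cons, Finset.prod_cons, Finset.prod_cons,
      weightedHomogeneousComponent_mul_of_le_weightedOrder hf.1 hs, ih hf.2]

theorem weightedHomogeneousComponent_weight_prod_pow {f : σ → MvPowerSeries σ R}
    (hf : ∀ i, w i ≤ (f i).weightedOrder w) (e : σ →₀ ℕ) :
    weightedHomogeneousComponent w (weight w e) (e.prod fun i n => f i ^ n) =
      e.prod fun i n => weightedHomogeneousComponent w (w i) (f i) ^ n := by
  simp only [weight_apply, Finsupp.sum, Finsupp.prod, smul_eq_mul]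
  rw [weightedHomogeneousComponent_prod _ fun i _ => natCast_mul_le_weightedOrder_pow (hf i) _]
  simp only [weightedHomogeneousComponent_pow (hf _)]

theorem order_le_order_weightedHomogeneousComponent (w : σ → ℕ) (p : ℕ)
    (f : MvPowerSeries σ R) : f.order ≤ (weightedHomogeneousComponent w p f).order :=
  le_order fun d hd => by
    rw [coeff_weightedHomogeneousComponent, coeff_of_lt_order hd, ite_self]

end WeightedHomogeneousComponent

section Order

variable {σ R : Type*} [CommSemiring R]

theorem le_order_sum {ι : Type*} (s : Finset ι) {f : ι → MvPowerSeries σ R} {n : ℕ∞}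
    (hf : ∀ i ∈ s, n ≤ (f i).order) : n ≤ (∑ i ∈ s, f i).order := by
  induction s using Finset.cons_induction with
  | empty => simp
  | cons a s ha ih =>
    rw [Finset.forall_mem_cons] at hf
    grw [Finset.sum_cons, ← min_order_le_add]
    exact le_min hf.1 (ih hf.2)

theorem exists_eq_sum_X_mul [Fintype σ] [LinearOrder σ] {F : MvPowerSeries σ R} {N : ℕ}
    (hF : ((N + 1 : ℕ) : ℕ∞) ≤ F.order) :
    ∃ G : σ → MvPowerSeries σ R, F = ∑ i, X i * G i ∧ ∀ i, (N : ℕ∞) ≤ (G i).order := by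
  classical
  -- each monomial of `F` is divided by the least variable occurring in it
  let G : σ → MvPowerSeries σ R := fun i m =>
    if (m + single i 1).support.min = (i : WithTop σ) then coeff (m + single i 1) F else 0
  have hXG : ∀ i m, coeff m (X i * G i) = if m.support.min = i then coeff m F else 0 := by
    intro i m
    rw [X_def, coeff_monomial_mul, one_mul]
    by_cases hi : single i 1 ≤ m
    · rw [if_pos hi, coeff_apply]
      simp only [G, tsub_add_cancel_of_le hi]
    · have hmin : m.support.min ≠ i := fun h => hi <| single_le_iff.2 <|
        Nat.one_le_iff_ne_zero.2 <| mem_support_iff.1 <| Finset.mem_of_min h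
      rw [if_neg hi, if_neg hmin]
  refine ⟨G, ?_, fun i => le_order fun m hm => ?_⟩
  · ext m
    simp only [map_sum, hXG]
    rcases eq_or_ne m 0 with rfl | hm
    · have h0 : constantCoeff F = 0 :=
        one_le_order_iff_constCoeff_eq_zero.1 (le_trans (by simp) hF)
      simp [h0]
    · obtain ⟨i, hi⟩ := Finset.min_of_nonempty (support_nonempty_iff.2 hm)
      simp [hi]
  · rw [coeff_apply]
    refine ite_eq_right_iff.2 fun _ => coeff_of_lt_order (lt_of_lt_of_le ?_ hF)
    rw [map_add, degree_single]
    exact_mod_cast Nat.add_lt_add_right (by exact_mod_cast hm) 1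

theorem order_le_order_map [Finite σ] {τ S F : Type*} [CommSemiring S]
    [FunLike F (MvPowerSeries σ R) (MvPowerSeries τ S)]
    [RingHomClass F (MvPowerSeries σ R) (MvPowerSeries τ S)] (α : F)
    (hα : ∀ i, constantCoeff (α (X i)) = 0) (f : MvPowerSeries σ R) : f.order ≤ (α f).order := by
  have := Fintype.ofFinite σ
  let : LinearOrder σ := LinearOrder.lift' _ (Fintype.equivFin σ).injective
  suffices h : ∀ N : ℕ, ∀ F : MvPowerSeries σ R, N ≤ F.order → N ≤ (α F).order from
    ENat.forall_natCast_le_iff_le.1 fun N => h N f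
  intro N
  induction N with
  | zero => simp
  | succ N ih =>
    intro F hF
    obtain ⟨G, rfl, hG⟩ := exists_eq_sum_X_mul hF
    rw [map_sum]
    refine le_order_sum _ fun i _ => ?_
    calc ((N + 1 : ℕ) : ℕ∞) = 1 + N := by push_cast; ring
      _ ≤ (α (X i)).order + (α (G i)).order :=
        add_le_add (one_le_order_iff_constCoeff_eq_zero.2 (hα i)) (ih _ (hG i))
      _ ≤ (α (X i * G i)).order := by rw [map_mul]; exact le_order_mul

end Order

variable {σ R : Type*} [CommRing R]

theorem natCast_add_one_le_weightedOrder_sub_weightedHomogeneousComponent {w : σ → ℕ}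
    {f : MvPowerSeries σ R} {p : ℕ} (hf : p ≤ f.weightedOrder w) :
    ((p + 1 : ℕ) : ℕ∞) ≤ (f - weightedHomogeneousComponent w p f).weightedOrder w :=
  nat_le_weightedOrder w fun d hd => by
    rw [map_sub, coeff_weightedHomogeneousComponent]
    split_ifs with h
    · exact sub_self _
    · have hlt : ((weight w d : ℕ) : ℕ∞) < p := by exact_mod_cast (by omega : weight w d < p)
      rw [coeff_eq_zero_of_lt_weightedOrder w (hlt.trans_le hf), sub_zero]

theorem addMonoidHom_eq_of_map_monomial_eq [Finite σ] {τ S : Type*} [Ring S]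
    {L₁ L₂ : MvPowerSeries σ R →+ MvPowerSeries τ S}
    (h₁ : ∀ F, F.order ≤ (L₁ F).order) (h₂ : ∀ F, F.order ≤ (L₂ F).order)
    {F : MvPowerSeries σ R} (hF : ∀ d, L₁ (monomial d (coeff d F)) = L₂ (monomial d (coeff d F))) :
    L₁ F = L₂ F := by
  ext m
  let N := degree m + 1
  let Q : MvPowerSeries σ R := truncTotal N F
  have hQ : Q = ∑ d ∈ (finite_of_degree_lt N).toFinset, monomial d (coeff d F) := by
    rw [show Q = MvPolynomial.coeToMvPowerSeries.ringHom (truncTotal N F) from rfl, truncTotal,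
      truncFinset_apply, map_sum]
    simp only [MvPolynomial.coeToMvPowerSeries.ringHom_apply, MvPolynomial.coe_monomial]
  have hF_sub_Q : (N : ℕ∞) ≤ (F - Q).order :=
    le_order fun d hd => by simp [Q, coeff_truncTotal _ (by exact_mod_cast hd)]
  have hcoeff : ∀ L : MvPowerSeries σ R →+ MvPowerSeries τ S, (∀ F, F.order ≤ (L F).order) →
      coeff m (L F) = coeff m (L Q) := fun L hL => by
    rw [← sub_eq_zero, ← map_sub, ← map_sub]
    exact coeff_of_lt_order
      ((Nat.cast_lt.2 (Nat.lt_succ_self _)).trans_le (hF_sub_Q.trans (hL _)))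
  rw [hcoeff L₁ h₁, hcoeff L₂ h₂, hQ, map_sum L₁, map_sum L₂,
    Finset.sum_congr rfl fun d _ => hF d]

theorem constantCoeff_map_X_eq_zero {k : Type*} [Field k]
    (φ : MvPowerSeries σ k ≃ₐ[k] MvPowerSeries σ k) (i : σ) : constantCoeff (φ (X i)) = 0 := by
  by_contra h
  have hX := (isUnit_map_iff φ _).1 (isUnit_iff_constantCoeff.2 (Ne.isUnit h))
  simpa using isUnit_iff_constantCoeff.1 hX

section InitialForm

variable {w : σ → ℕ} {φ ψ : MvPowerSeries σ R →ₐ[R] MvPowerSeries σ R}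

theorem weightedHomogeneousComponent_weight_map_monomial
    (hφ : ∀ i, w i ≤ (φ (X i)).weightedOrder w)
    (hψ : ∀ i, ψ (X i) = weightedHomogeneousComponent w (w i) (φ (X i)))
    (d : σ →₀ ℕ) (r : R) :
    weightedHomogeneousComponent w (weight w d) (φ (monomial d r)) = ψ (monomial d r) := by
  rw [← mul_one r, ← smul_eq_mul, map_smul, monomial_one_eq, map_smul, map_smul, map_smul,
    map_finsuppProd φ, map_finsuppProd ψ]
  simp only [map_pow]
  rw [weightedHomogeneousComponent_weight_prod_pow hφ]
  simp only [hψ]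

theorem weightedHomogeneousComponent_map_of_isWeightedHomogeneous [Finite σ]
    (hφ₀ : ∀ i, constantCoeff (φ (X i)) = 0) (hφ : ∀ i, w i ≤ (φ (X i)).weightedOrder w)
    (hψ : ∀ i, ψ (X i) = weightedHomogeneousComponent w (w i) (φ (X i)))
    {k : ℕ} {P : MvPowerSeries σ R} (hP : P.IsWeightedHomogeneous w k) :
    weightedHomogeneousComponent w k (φ P) = ψ P := by
  have hψ₀ : ∀ i, constantCoeff (ψ (X i)) = 0 := fun i => by
    rw [hψ, ← coeff_zero_eq_constantCoeff_apply, coeff_weightedHomogeneousComponent,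
      coeff_zero_eq_constantCoeff_apply, hφ₀, ite_self]
  refine addMonoidHom_eq_of_map_monomial_eq
    (L₁ := (weightedHomogeneousComponent w k).toAddMonoidHom.comp φ.toAddMonoidHom)
    (L₂ := ψ.toAddMonoidHom)
    (fun F => (order_le_order_map φ hφ₀ F).trans
      (order_le_order_weightedHomogeneousComponent w k _))
    (fun F => order_le_order_map ψ hψ₀ F) fun d => ?_
  by_cases hd : weight w d = k
  · subst hd
    exact weightedHomogeneousComponent_weight_map_monomial hφ hψ d _
  · simp [hP.coeff_eq_zero hd]

end InitialForm

end MvPowerSeries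

section

variable {n : ℕ} {w : Fin n → ℕ}

theorem sum_mul_eq_weight (m : Fin n →₀ ℕ) : ∑ j, w j * m j = weight w m := by
  simp [weight_eq_sum, mul_comm]

theorem memE_iff_le_weightedOrder {d : ℕ} {f : MvPowerSeries (Fin n) ℂ} :
    MemE n w d f ↔ (d : ℕ∞) ≤ f.weightedOrder w := by
  simp only [MemE, sum_mul_eq_weight]
  refine ⟨fun h => nat_le_weightedOrder w fun m hm => ?_, fun h m hm => ?_⟩
  · by_contra hne
    exact absurd (h m hne) (not_le.2 hm)
  · exact_mod_cast h.trans (weightedOrder_le w hm)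

theorem wcomp_eq_weightedHomogeneousComponent (e : ℕ) (f : MvPowerSeries (Fin n) ℂ) :
    wcomp n w e f = weightedHomogeneousComponent w e f := by
  ext m
  rw [coeff_weightedHomogeneousComponent, ← sum_mul_eq_weight]
  rfl

theorem wjet_eq_weightedHomogeneousComponent {k : ℕ} {f : MvPowerSeries (Fin n) ℂ}
    (hf : (k : ℕ∞) ≤ f.weightedOrder w) : wjet n w k f = weightedHomogeneousComponent w k f := by
  ext m
  rw [coeff_weightedHomogeneousComponent, coeff_apply, wjet, sum_mul_eq_weight]
  rcases lt_trichotomy (weight w m) k with hlt | heq | hgt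
  · rw [if_pos hlt.le, if_neg hlt.ne,
      coeff_eq_zero_of_lt_weightedOrder w ((Nat.cast_lt.2 hlt).trans_le hf)]
  · rw [if_pos heq.le, if_pos heq]
  · rw [if_neg (not_le.2 hgt), if_neg hgt.ne']

theorem le_weightedOrder_of_memE_sub {l : ℕ} {f f' : MvPowerSeries (Fin n) ℂ}
    (hf : (l : ℕ∞) ≤ f.weightedOrder w) (h : MemE n w l (f' - f)) :
    (l : ℕ∞) ≤ f'.weightedOrder w := by
  simpa using (le_min hf (memE_iff_le_weightedOrder.1 h)).trans (min_weightedOrder_le_add w)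

end

theorem principal_part_factorization_general (n : ℕ) (w : Fin n → ℕ) (k : ℕ)
    (f g : MvPowerSeries (Fin n) ℂ)
    (φ : MvPowerSeries (Fin n) ℂ ≃ₐ[ℂ] MvPowerSeries (Fin n) ℂ)
    (hφf : φ f = g)
    (hfk : MemE n w k f)
    (hφ : ∀ (l : ℕ) (h : MvPowerSeries (Fin n) ℂ), MemE n w l h → MemE n w l (φ h - h))
    (ψ : MvPowerSeries (Fin n) ℂ →ₐ[ℂ] MvPowerSeries (Fin n) ℂ)
    (hψ : ∀ i : Fin n, ψ (MvPowerSeries.X i) = wcomp n w (w i) (φ (MvPowerSeries.X i)))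
    (t : ℕ) (F : Fin t → MvPowerSeries (Fin n) ℂ) (s : Fin t → ℕ)
    (hfact : wjet n w k f = ∏ i, F i ^ s i) :
    wjet n w k g = ∏ i, ψ (F i) ^ s i := by
  have hφw : ∀ (l : ℕ) (h : MvPowerSeries (Fin n) ℂ),
      (l : ℕ∞) ≤ h.weightedOrder w → (l : ℕ∞) ≤ (φ h).weightedOrder w := fun l h hl =>
    le_weightedOrder_of_memE_sub hl (hφ l h (memE_iff_le_weightedOrder.2 hl))
  have hf : (k : ℕ∞) ≤ f.weightedOrder w := memE_iff_le_weightedOrder.1 hfk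
  set P := weightedHomogeneousComponent w k f
  have htail : weightedHomogeneousComponent w k (φ (f - P)) = 0 :=
    weightedHomogeneousComponent_of_lt_weightedOrder_eq_zero <|
      (Nat.cast_lt.2 k.lt_succ_self).trans_le <|
        hφw _ _ (natCast_add_one_le_weightedOrder_sub_weightedHomogeneousComponent hf)
  have hinit : weightedHomogeneousComponent w k (φ P) = ψ P :=
    weightedHomogeneousComponent_map_of_isWeightedHomogeneous (φ := φ.toAlgHom)
      (constantCoeff_map_X_eq_zero φ) (fun i => hφw _ _ (weightedOrder_X w i).ge)
      (fun i => (hψ i).trans (wcomp_eq_weightedHomogeneousComponent _ _))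
      (isWeightedHomogeneous_weightedHomogeneousComponent w f k)
  calc wjet n w k g = weightedHomogeneousComponent w k (φ f) := by
        rw [← hφf, wjet_eq_weightedHomogeneousComponent (hφw k f hf)]
    _ = ψ P := by rw [← hinit, ← sub_eq_zero, ← map_sub, ← map_sub, htail]
    _ = ∏ i, ψ (F i) ^ s i := by
        rw [show P = wjet n w k f from (wjet_eq_weightedHomogeneousComponent hf).symm, hfact,
          map_prod]
        simp only [map_pow]

/-- Factorization of the weighted principal part is preserved under right equivalence:
if `φ(f) = g`, `f` has maximal weighted filtration `k`, `φ` has filtration `≥ 0`, and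
`ψ = φ₀^w` is the algebra morphism sending each `x_i` to the part of `φ(x_i)` of
`w`-degree exactly `w-deg(x_i)`, then a factorization
`w-jet(f,k) = f₁^{s₁} ⋯ f_t^{s_t}` yields
`w-jet(g,k) = ψ(f₁)^{s₁} ⋯ ψ(f_t)^{s_t}`. -/
theorem principal_part_factorization (n : ℕ) (w : Fin n → ℕ) (k : ℕ)
    (f g : MvPowerSeries (Fin n) ℂ)
    (φ : MvPowerSeries (Fin n) ℂ ≃ₐ[ℂ] MvPowerSeries (Fin n) ℂ)
    (hφf : φ f = g)
    (hfk : MemE n w k f)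
    (hmax : ∃ m : Fin n →₀ ℕ, MvPowerSeries.coeff m f ≠ 0 ∧ ∑ j, w j * m j = k)
    (hφ : ∀ (l : ℕ) (h : MvPowerSeries (Fin n) ℂ), MemE n w l h → MemE n w l (φ h - h))
    (ψ : MvPowerSeries (Fin n) ℂ →ₐ[ℂ] MvPowerSeries (Fin n) ℂ)
    (hψ : ∀ i : Fin n, ψ (MvPowerSeries.X i) = wcomp n w (w i) (φ (MvPowerSeries.X i)))
    (t : ℕ) (F : Fin t → MvPowerSeries (Fin n) ℂ) (s : Fin t → ℕ)
    (hfact : wjet n w k f = ∏ i, F i ^ s i) :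
    wjet n w k g = ∏ i, ψ (F i) ^ s i :=
  principal_part_factorization_general n w k f g φ hφf hfk hφ ψ hψ t F s hfact
end

section
/- Let f_0 ∈ ℂ[[x_1,…,x_n]] be quasihomogeneous of degree d with respect to a weight w ∈ ℕ^n with all w_i > 0. Then f_0 satisfies Condition A: for every g of filtration d + δ with δ > 0 lying in the ideal generated by the partial derivatives of f_0, there exist power series v_1,…,v_n and g' such that g = ∑_i (∂f_0/∂x_i)·v_i + g', where the vector field (v_1,…,v_n) has filtration ≥ δ (each monomial of v_i has w-degree ≥ w_i + δ) and g' has filtration > d + δ. -/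
set_option synthInstance.maxHeartbeats 1000000
set_option maxHeartbeats 1000000

open MvPolynomial

/-! Every monomial of `∂f₀/∂xᵢ` has weight exactly `d - wᵢ`. Writing `g = ∑ aᵢ ∂f₀/∂xᵢ` and
letting `vᵢ` be the part of `aᵢ` of weight `≥ wᵢ + δ`, the product `(∂f₀/∂xᵢ) vᵢ` is exactly the
part of `(∂f₀/∂xᵢ) aᵢ` of weight `≥ d + δ`. Summing over `i`, `∑ (∂f₀/∂xᵢ) vᵢ` is the part of `g`
of weight `≥ d + δ`, which is all of `g`; so `g' = 0` works. -/

open Finsupp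

theorem sum_mul_apply_eq_weight {σ : Type*} [Fintype σ] (w : σ → ℕ) (m : σ →₀ ℕ) :
    ∑ j, w j * m j = weight w m := by
  simp only [weight_eq_sum, smul_eq_mul, mul_comm]

theorem MvPolynomial.IsWeightedHomogeneous.weight_add_eq_of_coeff_pderiv_ne_zero
    {σ R : Type*} [CommSemiring R] {w : σ → ℕ} {φ : MvPolynomial σ R} {d : ℕ}
    (hφ : IsWeightedHomogeneous w φ d) {i : σ} {s : σ →₀ ℕ}
    (hs : coeff s (pderiv i φ) ≠ 0) : weight w s + w i = d := by
  rw [coeff_pderiv] at hs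
  have := hφ (left_ne_zero_of_mul hs)
  rwa [map_add, weight_single, one_smul] at this

namespace MvPowerSeries

open Finset.HasAntidiagonal

variable {σ R : Type*} [Semiring R] (w : σ → ℕ)

noncomputable def weightedTail (k : ℕ) (f : MvPowerSeries σ R) : MvPowerSeries σ R :=
  fun m => if k ≤ weight w m then coeff m f else 0

theorem coeff_weightedTail (k : ℕ) (f : MvPowerSeries σ R) (m : σ →₀ ℕ) :
    coeff m (weightedTail w k f) = if k ≤ weight w m then coeff m f else 0 :=
  rfl

variable {w}

theorem le_weight_of_coeff_weightedTail_ne_zero {k : ℕ} {f : MvPowerSeries σ R} {m : σ →₀ ℕ}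
    (hm : coeff m (weightedTail w k f) ≠ 0) : k ≤ weight w m := by
  by_contra hk
  exact hm (if_neg hk)

/-- `hP` says that `P` is weighted homogeneous of degree `e - k`, without truncated subtraction. -/
theorem coeff_mul_weightedTail {P : MvPowerSeries σ R} {k e : ℕ}
    (hP : ∀ s, coeff s P ≠ 0 → weight w s + k = e) (a : MvPowerSeries σ R) (m : σ →₀ ℕ) :
    coeff m (P * weightedTail w k a) = if e ≤ weight w m then coeff m (P * a) else 0 := by
  classical
  have hterm : ∀ st ∈ antidiagonal m, coeff st.1 P * coeff st.2 (weightedTail w k a) =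
      if e ≤ weight w m then coeff st.1 P * coeff st.2 a else 0 := by
    rintro ⟨s, t⟩ hst
    rw [mem_antidiagonal] at hst
    by_cases hs : coeff s P = 0
    · simp only [hs, zero_mul, ite_self]
    · have hweight : weight w s + weight w t = weight w m := by rw [← map_add, hst]
      have hsk := hP s hs
      have hthreshold : k ≤ weight w t ↔ e ≤ weight w m := by omega
      simp only [coeff_weightedTail, hthreshold, mul_ite, mul_zero]
  rw [coeff_mul, Finset.sum_congr rfl hterm, Finset.sum_ite_irrel, Finset.sum_const_zero,
    coeff_mul]

end MvPowerSeries

theorem quasihomogeneous_conditionA_general (n : ℕ) (w : Fin n → ℕ)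
    (d : ℕ) (f₀ : MvPolynomial (Fin n) ℂ)
    (hf₀ : ∀ s ∈ f₀.support, ∑ i, w i * s i = d)
    (δ : ℕ) (g : MvPowerSeries (Fin n) ℂ)
    (hg : g ∈ Ideal.span (Set.range fun i => (↑(pderiv i f₀) : MvPowerSeries (Fin n) ℂ)))
    (hgfil : MemE n w (d + δ) g) :
    ∃ (v : Fin n → MvPowerSeries (Fin n) ℂ) (g' : MvPowerSeries (Fin n) ℂ),
      g = (∑ i, (↑(pderiv i f₀) : MvPowerSeries (Fin n) ℂ) * v i) + g' ∧
      (∀ i, MemE n w (w i + δ) (v i)) ∧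
      MemE n w (d + δ + 1) g' := by
  simp only [MemE, sum_mul_apply_eq_weight] at hf₀ hgfil ⊢
  have hhom : IsWeightedHomogeneous w f₀ d := fun s hs =>
    hf₀ s (MvPolynomial.mem_support_iff.2 hs)
  have hpderiv (i : Fin n) (s : Fin n →₀ ℕ)
      (hs : MvPowerSeries.coeff s (pderiv i f₀ : MvPowerSeries (Fin n) ℂ) ≠ 0) :
      weight w s + (w i + δ) = d + δ := by
    rw [MvPolynomial.coeff_coe] at hs
    have := hhom.weight_add_eq_of_coeff_pderiv_ne_zero hs
    omega
  obtain ⟨a, rfl⟩ := (Submodule.mem_span_range_iff_exists_fun _).1 hg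
  refine ⟨fun i => MvPowerSeries.weightedTail w (w i + δ) (a i), 0, ?_,
    fun i m => MvPowerSeries.le_weight_of_coeff_weightedTail_ne_zero,
    fun m hm => absurd (map_zero _) hm⟩
  ext m
  rw [add_zero]
  by_cases hm : d + δ ≤ weight w m
  · simp only [map_sum]
    refine Finset.sum_congr rfl fun i _ => ?_
    rw [MvPowerSeries.coeff_mul_weightedTail (hpderiv i), if_pos hm, smul_eq_mul, mul_comm]
  · rw [not_imp_comm.1 (hgfil m) hm, map_sum]
    simp only [MvPowerSeries.coeff_mul_weightedTail (hpderiv _), if_neg hm, Finset.sum_const_zero]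

/-- Quasihomogeneous polynomials satisfy Condition A: any `g` of filtration `d + δ`
(`δ > 0`) in the ideal generated by the partials of `f₀` decomposes as
`g = ∑ (∂f₀/∂x_i)·v_i + g'` where the vector field `v` has filtration `≥ δ` and
`g'` has filtration `> d + δ`. -/
theorem quasihomogeneous_conditionA (n : ℕ) (w : Fin n → ℕ) (hw : ∀ i, 0 < w i)
    (d : ℕ) (f₀ : MvPolynomial (Fin n) ℂ)
    (hf₀ : ∀ s ∈ f₀.support, ∑ i, w i * s i = d)
    (δ : ℕ) (hδ : 0 < δ) (g : MvPowerSeries (Fin n) ℂ)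
    (hg : g ∈ Ideal.span (Set.range fun i => (↑(pderiv i f₀) : MvPowerSeries (Fin n) ℂ)))
    (hgfil : MemE n w (d + δ) g) :
    ∃ (v : Fin n → MvPowerSeries (Fin n) ℂ) (g' : MvPowerSeries (Fin n) ℂ),
      g = (∑ i, (↑(pderiv i f₀) : MvPowerSeries (Fin n) ℂ) * v i) + g' ∧
      (∀ i, MemE n w (w i + δ) (v i)) ∧
      MemE n w (d + δ + 1) g' :=
  quasihomogeneous_conditionA_general n w d f₀ hf₀ δ g hg hgfil
end
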